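/- Let G(n) and H(n) be star graphs with center node 1 and 4n+1 leaves, where in G(n) the center has 2n+1 leaves connected by relation r1 and 2n leaves connected by relation r2, while in H(n) the center has 2n leaves connected by r1 and 2n+1 leaves connected by r2 (no unary predicates). Then for every FOC2 formula φ(x) in which every counting threshold is at most m, φ cannot distinguish (G(m),1) from (H(m),1): (G(m),1) ⊨ φ iff (H(m),1) ⊨ φ. -/

import Mathlib

inductive Var : Type
  | x | y
deriving DecidableEq

structure MRGraph (P1 P2 : Type) where
  V : Type
  [fintV : Fintype V]
  [decV : DecidableEq V]
  unary : P1 → V → Prop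
  rel : P2 → V → V → Prop
  [decU : ∀ p, DecidablePred (unary p)]
  [decR : ∀ r, DecidableRel (rel r)]

attribute [instance] MRGraph.fintV MRGraph.decV MRGraph.decU MRGraph.decR

inductive FOC2 (P1 P2 : Type) : Type
  | tru : FOC2 P1 P2
  | atom : P1 → Var → FOC2 P1 P2
  | rel : P2 → Var → Var → FOC2 P1 P2
  | and : FOC2 P1 P2 → FOC2 P1 P2 → FOC2 P1 P2
  | or : FOC2 P1 P2 → FOC2 P1 P2 → FOC2 P1 P2
  | not : FOC2 P1 P2 → FOC2 P1 P2
  | exge : ℕ → Var → FOC2 P1 P2 → FOC2 P1 P2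

variable {P1 P2 : Type}

/-- Satisfaction of a `FOC2` formula in a multi-relational graph under an assignment. -/
def MRGraph.sat (G : MRGraph P1 P2) : (Var → G.V) → FOC2 P1 P2 → Prop
  | _, .tru => True
  | σ, .atom p v => G.unary p (σ v)
  | σ, .rel r u w => G.rel r (σ u) (σ w)
  | σ, .and φ ψ => G.sat σ φ ∧ G.sat σ ψ
  | σ, .or φ ψ => G.sat σ φ ∨ G.sat σ ψ
  | σ, .not φ => ¬ G.sat σ φ
  | σ, .exge n v φ => ∃ S : Finset G.V, S.card = n ∧ ∀ a ∈ S, G.sat (Function.update σ v a) φ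

/-- Quantifier depth. -/
def FOC2.depth : FOC2 P1 P2 → ℕ
  | .tru => 0
  | .atom _ _ => 0
  | .rel _ _ _ => 0
  | .and φ ψ => max φ.depth ψ.depth
  | .or φ ψ => max φ.depth ψ.depth
  | .not φ => φ.depth
  | .exge _ _ φ => φ.depth + 1

/-- All counting thresholds are at most `m`. -/
def FOC2.thresholdsLe (m : ℕ) : FOC2 P1 P2 → Prop
  | .tru => True
  | .atom _ _ => True
  | .rel _ _ _ => True
  | .and φ ψ => φ.thresholdsLe m ∧ ψ.thresholdsLe m
  | .or φ ψ => φ.thresholdsLe m ∧ ψ.thresholdsLe m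
  | .not φ => φ.thresholdsLe m
  | .exge n _ φ => n ≤ m ∧ φ.thresholdsLe m

/-- Free variables. -/
def FOC2.freeVars : FOC2 P1 P2 → Finset Var
  | .tru => ∅
  | .atom _ v => {v}
  | .rel _ u w => {u, w}
  | .and φ ψ => φ.freeVars ∪ ψ.freeVars
  | .or φ ψ => φ.freeVars ∪ ψ.freeVars
  | .not φ => φ.freeVars
  | .exge _ v φ => φ.freeVars \ {v}

/-- Parse-tree size. -/
def FOC2.size : FOC2 P1 P2 → ℕ
  | .tru => 1
  | .atom _ _ => 1
  | .rel _ _ _ => 1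
  | .and φ ψ => φ.size + ψ.size + 1
  | .or φ ψ => φ.size + ψ.size + 1
  | .not φ => φ.size + 1
  | .exge _ _ φ => φ.size + 1


/-- `r`-edge predicate from the centre of a star with `p` r1-leaves (nodes `1..p`)
followed by r2-leaves (nodes `p+1..`). `r = true` is `r1`, `r = false` is `r2`. -/
def starEdge (p : ℕ) (r : Bool) (i : ℕ) : Prop :=
  (r = true ∧ 1 ≤ i ∧ i ≤ p) ∨ (r = false ∧ p + 1 ≤ i)

instance (p : ℕ) (r : Bool) (i : ℕ) : Decidable (starEdge p r i) := by
  unfold starEdge; infer_instance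

/-- Star graph: node `0` is the centre, nodes `1..p` are `r1`-leaves and
nodes `p+1..p+q` are `r2`-leaves; edges are symmetric. -/
def star (p q : ℕ) : MRGraph Empty Bool where
  V := Fin (p + q + 1)
  unary := fun e _ => e.elim
  rel := fun r a b =>
    (a.val = 0 ∧ starEdge p r b.val) ∨ (b.val = 0 ∧ starEdge p r a.val)
  decU := fun e => e.elim
  decR := fun _ _ _ => by infer_instance

/-- The centre of a star graph. -/
def starCenter (p q : ℕ) : (star p q).V := ⟨0, Nat.succ_pos _⟩

/-!
Colour the vertices of a star by centre, `r1`-leaf and `r2`-leaf. Atomic facts about a pair of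
vertices depend only on their colours, and once every colour class holds either at least `m`
vertices in both graphs or equally many in both, a quantifier `∃^{≥n}` with `n ≤ m` cannot tell
the two graphs apart: a witness set in one graph is copied, colour by colour, into the other.
Hence assignments with equal colours satisfy the same formulas with thresholds at most `m`, and
the centres of `G(m)` and `H(m)` have the same colour.
-/

open Finset

theorem Finset.exists_card_eq_forall_exists_eq {α β K : Type*} [Fintype α] [Fintype β]
    [DecidableEq K] {f : α → K} {g : β → K} {m : ℕ}
    (hfg : ∀ k, min #{a | f a = k} m ≤ #{b | g b = k}) (S : Finset α) (hS : #S ≤ m) :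
    ∃ T : Finset β, #T = #S ∧ ∀ b ∈ T, ∃ a ∈ S, f a = g b := by
  classical
  have hfiber (k : K) : #{a ∈ S | f a = k} ≤ #{b | g b = k} :=
    (le_min (card_le_card (filter_subset_filter _ (subset_univ S)))
      ((card_filter_le _ _).trans hS)).trans (hfg k)
  choose t ht hcard using fun k => exists_subset_card_eq (hfiber k)
  have hdisj : (S.image f : Set K).PairwiseDisjoint t := fun k _ l _ hkl =>
    disjoint_left.2 fun b hbk hbl =>
      hkl ((mem_filter.1 (ht k hbk)).2.symm.trans (mem_filter.1 (ht l hbl)).2)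
  refine ⟨(S.image f).biUnion t, ?_, ?_⟩
  · rw [card_biUnion hdisj, card_eq_sum_card_image f S]
    exact sum_congr rfl fun k _ => hcard k
  · intro b hb
    obtain ⟨k, hk, hbk⟩ := mem_biUnion.1 hb
    obtain ⟨a, ha, rfl⟩ := mem_image.1 hk
    exact ⟨a, ha, (mem_filter.1 (ht _ hbk)).2.symm⟩

namespace MRGraph

variable {K : Type*} [DecidableEq K]

structure ColoringsAgreeUpTo (m : ℕ) {G H : MRGraph P1 P2} (κG : G.V → K) (κH : H.V → K) :
    Prop where
  unary_iff : ∀ p a b, κG a = κH b → (G.unary p a ↔ H.unary p b)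
  rel_iff : ∀ r a a' b b', κG a = κH b → κG a' = κH b' → (G.rel r a a' ↔ H.rel r b b')
  min_card_eq : ∀ k, min #{a | κG a = k} m = min #{b | κH b = k} m

theorem ColoringsAgreeUpTo.symm {m : ℕ} {G H : MRGraph P1 P2} {κG : G.V → K} {κH : H.V → K}
    (h : ColoringsAgreeUpTo m κG κH) : ColoringsAgreeUpTo m κH κG where
  unary_iff p b a hba := (h.unary_iff p a b hba.symm).symm
  rel_iff r b b' a a' hba hba' := (h.rel_iff r a a' b b' hba.symm hba'.symm).symm
  min_card_eq k := (h.min_card_eq k).symm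

theorem sat_exge_of_coloringsAgreeUpTo {m n : ℕ} {G H : MRGraph P1 P2} {κG : G.V → K}
    {κH : H.V → K} (h : ColoringsAgreeUpTo m κG κH) (hn : n ≤ m) {v : Var} {φ : FOC2 P1 P2}
    {σ : Var → G.V} {τ : Var → H.V}
    (hφ : ∀ a b, κG a = κH b → G.sat (Function.update σ v a) φ → H.sat (Function.update τ v b) φ)
    (hσ : G.sat σ (.exge n v φ)) : H.sat τ (.exge n v φ) := by
  obtain ⟨S, rfl, hS⟩ := hσ
  obtain ⟨T, hT, hTS⟩ := exists_card_eq_forall_exists_eq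
    (fun k => (h.min_card_eq k).le.trans (min_le_left _ _)) S hn
  refine ⟨T, hT, fun b hb => ?_⟩
  obtain ⟨a, ha, hab⟩ := hTS b hb
  exact hφ a b hab (hS a ha)

theorem sat_iff_of_coloringsAgreeUpTo {m : ℕ} {G H : MRGraph P1 P2} {κG : G.V → K}
    {κH : H.V → K} (h : ColoringsAgreeUpTo m κG κH) {φ : FOC2 P1 P2} (hφ : φ.thresholdsLe m)
    {σ : Var → G.V} {τ : Var → H.V} (hστ : ∀ v, κG (σ v) = κH (τ v)) :
    G.sat σ φ ↔ H.sat τ φ := by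
  induction φ generalizing σ τ with
  | tru => exact Iff.rfl
  | atom p v => exact h.unary_iff p _ _ (hστ v)
  | rel r u w => exact h.rel_iff r _ _ _ _ (hστ u) (hστ w)
  | and φ ψ ihφ ihψ => exact and_congr (ihφ hφ.1 hστ) (ihψ hφ.2 hστ)
  | or φ ψ ihφ ihψ => exact or_congr (ihφ hφ.1 hστ) (ihψ hφ.2 hστ)
  | not φ ih => exact not_congr (ih hφ hστ)
  | exge n v φ ih =>
    have hupdate (a : G.V) (b : H.V) (hab : κG a = κH b) (w : Var) :
        κG (Function.update σ v a w) = κH (Function.update τ v b w) := by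
      rcases eq_or_ne w v with rfl | hw
      · simpa using hab
      · simpa [hw] using hστ w
    exact ⟨sat_exge_of_coloringsAgreeUpTo h hφ.1 fun a b hab => (ih hφ.2 (hupdate a b hab)).1,
      sat_exge_of_coloringsAgreeUpTo h.symm hφ.1 fun b a hba =>
        (ih hφ.2 (hupdate a b hba.symm)).2⟩

end MRGraph

open MRGraph

/-- `none` marks the centre and `some r` a leaf attached by `r`. -/
def starColor (p q : ℕ) (a : (star p q).V) : Option Bool :=
  if a.val = 0 then none else some (decide (a.val ≤ p))

theorem star_rel_iff {p q : ℕ} (r : Bool) (a b : (star p q).V) :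
    (star p q).rel r a b ↔ (starColor p q a = none ∧ starColor p q b = some r) ∨
      (starColor p q b = none ∧ starColor p q a = some r) := by
  show (a.val = 0 ∧ starEdge p r b.val) ∨ (b.val = 0 ∧ starEdge p r a.val) ↔ _
  grind [starColor, starEdge]

theorem card_starColor_eq (p q : ℕ) (c : Option Bool) :
    #{a | starColor p q a = c} = c.elim 1 fun r => if r then p else q := by
  have hval (P : ℕ → Prop) [DecidablePred P] :
      #{a : (star p q).V | P a.val} = #{i ∈ Iio (p + q + 1) | P i} := by
    rw [← Fin.map_valEmbedding_univ, filter_map, card_map]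
    rfl
  refine (hval fun i => (if i = 0 then none else some (decide (i ≤ p))) = c).trans ?_
  rcases c with _ | _ | _
  · convert card_singleton 0 using 2
    · ext i; grind
    · rfl
  · convert Nat.card_Ioc p (p + q) using 2
    · ext i; grind
    · exact (Nat.add_sub_cancel_left ..).symm
  · convert Nat.card_Ioc 0 p using 2
    · ext i; grind
    · rfl

theorem coloringsAgreeUpTo_starColor {m p q p' q' : ℕ} (hp : min p m = min p' m)
    (hq : min q m = min q' m) : ColoringsAgreeUpTo m (starColor p q) (starColor p' q') where
  unary_iff p := p.elim
  rel_iff r a a' b b' hab hab' := by rw [star_rel_iff, star_rel_iff, hab, hab']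
  min_card_eq := by rintro (_ | _ | _) <;> simp [card_starColor_eq, hp, hq]

theorem stmt5_general (m : ℕ) (φ : FOC2 Empty Bool)
    (hth : φ.thresholdsLe m) :
    ((star (2 * m + 1) (2 * m)).sat (fun _ => starCenter (2 * m + 1) (2 * m)) φ ↔
     (star (2 * m) (2 * m + 1)).sat (fun _ => starCenter (2 * m) (2 * m + 1)) φ) :=
  sat_iff_of_coloringsAgreeUpTo (coloringsAgreeUpTo_starColor (by omega) (by omega)) hth
    fun _ => rfl

/-- No `FOC2` formula with one free variable and all counting thresholds at most `m`
distinguishes the centre of `G(m)` (centre with `2m+1` r1-leaves and `2m` r2-leaves)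
from the centre of `H(m)` (centre with `2m` r1-leaves and `2m+1` r2-leaves). -/
theorem stmt5 (m : ℕ) (φ : FOC2 Empty Bool)
    (hth : φ.thresholdsLe m) (hfv : φ.freeVars ⊆ {Var.x}) :
    ((star (2 * m + 1) (2 * m)).sat (fun _ => starCenter (2 * m + 1) (2 * m)) φ ↔
     (star (2 * m) (2 * m + 1)).sat (fun _ => starCenter (2 * m) (2 * m + 1)) φ) :=
  stmt5_general m φ hth
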